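/- Let N ≥ 1 be an integer and κ₁ ∈ (0,1). Let h : ℝ → ℝ^N be continuously differentiable and 2π-periodic with [h′]_{Ċ^{κ₁}} < ∞. Then there is a constant C depending only on κ₁ and N such that for every x ∈ ℝ and every α ∈ (−π, π) with α ≠ 0: ‖h′(x − α) − (1/2)·cot(α/2)·(h(x) − h(x − α))‖ ≤ C |α|^{κ₁} [h′]_{Ċ^{κ₁}}. -/

import Mathlib

open Set Real

/-!
Write `v = h′(x − α)`, `Δ = h x − h (x − α)` and `λ = cot(α/2)/2`. Then
`v − λΔ = (1 − λα) v − λ (Δ − α v)`. The mean value theorem applied to `t ↦ h t − t • v` gives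
`‖Δ − α v‖ ≤ K |α|^κ₁ |α|`, which the bound `|λα| = |(α/2) cot(α/2)| ≤ 1` turns into `K |α|^κ₁`.
For the first term, `0 ≤ 1 − λα ≤ α²/4`, while periodicity bounds `‖v‖` by `K (2π)^κ₁`: over a
full period the increment of `h` vanishes, so `2π ‖v‖` is itself a Taylor remainder.
-/

lemma abs_mul_cos_abs_div_sin_abs (s : ℝ) : |s| * cos |s| / sin |s| = s * cos s / sin s := by
  rcases abs_choice s with hs | hs <;> rw [hs]
  simp only [cos_neg, sin_neg, neg_mul, neg_div_neg_eq]

lemma mul_cos_div_sin_nonneg {s : ℝ} (hs : |s| < π / 2) : 0 ≤ s * cos s / sin s := by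
  rw [← abs_mul_cos_abs_div_sin_abs]
  have hcos : 0 ≤ cos |s| := cos_nonneg_of_mem_Icc ⟨by linarith [abs_nonneg s], hs.le⟩
  have hsin : 0 ≤ sin |s| := sin_nonneg_of_nonneg_of_le_pi (abs_nonneg s) (by linarith [pi_pos])
  positivity

lemma mul_cos_div_sin_le_one {s : ℝ} (h0 : s ≠ 0) (hs : |s| < π / 2) :
    s * cos s / sin s ≤ 1 := by
  rw [← abs_mul_cos_abs_div_sin_abs]
  set t := |s|
  have ht : 0 < t := abs_pos.mpr h0
  have hcos : 0 < cos t := cos_pos_of_mem_Ioo ⟨by linarith, hs⟩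
  have hsin : 0 < sin t := sin_pos_of_pos_of_lt_pi ht (by linarith)
  have htan : t < sin t / cos t := tan_eq_sin_div_cos t ▸ lt_tan ht hs
  rw [div_le_one hsin]
  exact ((lt_div_iff₀ hcos).mp htan).le

lemma one_sub_mul_cos_div_sin_le_sq {s : ℝ} (h0 : s ≠ 0) (hs : |s| < π / 2) :
    1 - s * cos s / sin s ≤ s ^ 2 := by
  rw [← abs_mul_cos_abs_div_sin_abs, ← sq_abs s]
  set t := |s|
  have ht : 0 < t := abs_pos.mpr h0
  have hsin : 0 < sin t := sin_pos_of_pos_of_lt_pi ht (by linarith)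
  rw [sub_le_iff_le_add, ← sub_le_iff_le_add', le_div_iff₀ hsin]
  -- `sin t − t cos t ≤ t (1 − cos t) ≤ t³/2`, while Jordan's inequality gives
  -- `t² sin t ≥ 2t³/π ≥ t³/2`.
  have hsin_le : sin t ≤ t := sin_le ht.le
  have hcos : 1 - t ^ 2 / 2 ≤ cos t := one_sub_sq_div_two_le_cos
  have h2π : (1 : ℝ) / 2 ≤ 2 / π := by rw [div_le_div_iff₀ two_pos pi_pos]; linarith [pi_le_four]
  have hjordan : 1 / 2 * t ≤ sin t :=
    (mul_le_mul_of_nonneg_right h2π ht.le).trans (mul_le_sin ht.le hs.le)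
  have := mul_le_mul_of_nonneg_left hjordan (sq_nonneg t)
  nlinarith

lemma abs_half_cot_half_mul_abs_le_one {α : ℝ} (h0 : α ≠ 0) (hα : |α| < π) :
    |1 / 2 * (cos (α / 2) / sin (α / 2))| * |α| ≤ 1 := by
  have hhalf : |α / 2| < π / 2 := by rw [abs_div, abs_two]; linarith
  rw [← abs_mul, show 1 / 2 * (cos (α / 2) / sin (α / 2)) * α = α / 2 * cos (α / 2) / sin (α / 2)
    by ring, abs_of_nonneg (mul_cos_div_sin_nonneg hhalf)]
  exact mul_cos_div_sin_le_one (div_ne_zero h0 two_ne_zero) hhalf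

lemma abs_one_sub_half_cot_half_mul_le {α : ℝ} (h0 : α ≠ 0) (hα : |α| < π) :
    |1 - 1 / 2 * (cos (α / 2) / sin (α / 2)) * α| ≤ α ^ 2 / 4 := by
  have hhalf : |α / 2| < π / 2 := by rw [abs_div, abs_two]; linarith
  have hle := mul_cos_div_sin_le_one (div_ne_zero h0 two_ne_zero) hhalf
  have hsub := one_sub_mul_cos_div_sin_le_sq (div_ne_zero h0 two_ne_zero) hhalf
  rw [show 1 / 2 * (cos (α / 2) / sin (α / 2)) * α = α / 2 * cos (α / 2) / sin (α / 2) by ring,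
    abs_of_nonneg (by linarith)]
  linarith

lemma rpow_le_rpow_sub_mul_rpow {a b p q : ℝ} (ha : 0 < a) (hab : a ≤ b) (hqp : q ≤ p) :
    a ^ p ≤ b ^ (p - q) * a ^ q := by
  calc a ^ p = a ^ (p - q) * a ^ q := by rw [← rpow_add ha, sub_add_cancel]
    _ ≤ b ^ (p - q) * a ^ q := by gcongr

section

variable {E : Type*} [NormedAddCommGroup E] [NormedSpace ℝ E]

lemma norm_sub_smul_le (v Δ : E) (c α : ℝ) :
    ‖v - c • Δ‖ ≤ |1 - c * α| * ‖v‖ + |c| * ‖Δ - α • v‖ := by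
  calc ‖v - c • Δ‖ = ‖(1 - c * α) • v - c • (Δ - α • v)‖ := by congr 1; module
    _ ≤ |1 - c * α| * ‖v‖ + |c| * ‖Δ - α • v‖ := by
        refine (norm_sub_le _ _).trans_eq ?_
        rw [norm_smul, norm_smul, Real.norm_eq_abs, Real.norm_eq_abs]

lemma norm_sub_sub_smul_deriv_le_of_holder {h : ℝ → E} {K κ : ℝ} (hh : Differentiable ℝ h)
    (hK : ∀ x y, ‖deriv h x - deriv h y‖ ≤ K * |x - y| ^ κ) (hK0 : 0 ≤ K) (hκ : 0 ≤ κ)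
    (a b : ℝ) : ‖h b - h a - (b - a) • deriv h a‖ ≤ K * |b - a| ^ κ * |b - a| := by
  have hderiv : ∀ t ∈ uIcc a b, HasDerivWithinAt (fun t => h t - t • deriv h a)
      (deriv h t - deriv h a) (uIcc a b) t := fun t _ => by
    have := (hh t).hasDerivAt.sub ((hasDerivAt_id t).smul_const (deriv h a))
    rw [one_smul] at this
    exact this.hasDerivWithinAt
  have hbound : ∀ t ∈ uIcc a b, ‖deriv h t - deriv h a‖ ≤ K * |b - a| ^ κ := fun t ht =>
    (hK t a).trans (by gcongr K * ?_ ^ κ; exact abs_sub_left_of_mem_uIcc ht)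
  have := (convex_uIcc a b).norm_image_sub_le_of_norm_hasDerivWithin_le hderiv hbound
    left_mem_uIcc right_mem_uIcc
  rw [Real.norm_eq_abs] at this
  convert this using 2
  module

lemma norm_deriv_le_of_periodic_of_holder {h : ℝ → E} {K κ T : ℝ} (hh : Differentiable ℝ h)
    (hp : Function.Periodic h T) (hT : 0 < T)
    (hK : ∀ x y, ‖deriv h x - deriv h y‖ ≤ K * |x - y| ^ κ) (hK0 : 0 ≤ K) (hκ : 0 ≤ κ)
    (z : ℝ) : ‖deriv h z‖ ≤ K * T ^ κ := by
  have := norm_sub_sub_smul_deriv_le_of_holder hh hK hK0 hκ z (z + T)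
  rw [hp z, sub_self, zero_sub, norm_neg, add_sub_cancel_left, norm_smul, Real.norm_eq_abs,
    abs_of_pos hT, mul_comm] at this
  exact le_of_mul_le_mul_right this hT

end

theorem periodic_difference_quotient_deviation_bound_general
    (N : ℕ) (κ₁ : ℝ) (hκ₁ : κ₁ ∈ Ioo (0 : ℝ) 1) :
    ∃ C : ℝ, 0 < C ∧
      ∀ (h : ℝ → EuclideanSpace ℝ (Fin N)) (K : ℝ),
        ContDiff ℝ 1 h →
        Function.Periodic h (2 * Real.pi) →
        (∀ x y : ℝ, ‖deriv h x - deriv h y‖ ≤ K * |x - y| ^ κ₁) →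
        ∀ x : ℝ, ∀ α ∈ Ioo (-Real.pi) Real.pi, α ≠ 0 →
          ‖deriv h (x - α) -
              ((1 / 2) * (Real.cos (α / 2) / Real.sin (α / 2))) • (h x - h (x - α))‖ ≤
            C * |α| ^ κ₁ * K := by
  obtain ⟨hκ0, hκ1⟩ := hκ₁
  refine ⟨π ^ (2 - κ₁) * (2 * π) ^ κ₁ / 4 + 1, by positivity,
    fun h K hh hp hK x α hα hα0 => ?_⟩
  have hK0 : 0 ≤ K := by simpa using (norm_nonneg _).trans (hK 1 0)
  have hd : Differentiable ℝ h := hh.differentiable one_ne_zero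
  have hα_lt : |α| < π := abs_lt.mpr hα
  have hv : ‖deriv h (x - α)‖ ≤ K * (2 * π) ^ κ₁ :=
    norm_deriv_le_of_periodic_of_holder hd hp (by positivity) hK hK0 hκ0.le _
  have hrem : ‖h x - h (x - α) - α • deriv h (x - α)‖ ≤ K * |α| ^ κ₁ * |α| := by
    simpa using norm_sub_sub_smul_deriv_le_of_holder hd hK hK0 hκ0.le (x - α) x
  have hsq : α ^ 2 ≤ π ^ (2 - κ₁) * |α| ^ κ₁ := by
    rw [← sq_abs, ← rpow_two]
    exact rpow_le_rpow_sub_mul_rpow (abs_pos.mpr hα0) hα_lt.le (by linarith)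
  set c := 1 / 2 * (cos (α / 2) / sin (α / 2))
  calc _ ≤ |1 - c * α| * ‖deriv h (x - α)‖ + |c| * ‖h x - h (x - α) - α • deriv h (x - α)‖ :=
        norm_sub_smul_le _ _ c α
    _ ≤ α ^ 2 / 4 * (K * (2 * π) ^ κ₁) + |c| * (K * |α| ^ κ₁ * |α|) := by
        gcongr
        exact abs_one_sub_half_cot_half_mul_le hα0 hα_lt
    _ = α ^ 2 / 4 * (K * (2 * π) ^ κ₁) + (|c| * |α|) * (K * |α| ^ κ₁) := by ring
    _ ≤ π ^ (2 - κ₁) * |α| ^ κ₁ / 4 * (K * (2 * π) ^ κ₁) + 1 * (K * |α| ^ κ₁) := by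
        gcongr
        exact abs_half_cot_half_mul_abs_le_one hα0 hα_lt
    _ = (π ^ (2 - κ₁) * (2 * π) ^ κ₁ / 4 + 1) * |α| ^ κ₁ * K := by ring

/-- For a `C¹`, `2π`-periodic map `h` with `κ₁`-Hölder derivative, the
deviation `Ẽ^α h(x) = h′(x−α) − (1/2)cot(α/2)(h(x) − h(x−α))` is bounded by
`C |α|^{κ₁} [h′]_{Ċ^{κ₁}}`. -/
theorem periodic_difference_quotient_deviation_bound
    (N : ℕ) (hN : 1 ≤ N) (κ₁ : ℝ) (hκ₁ : κ₁ ∈ Ioo (0 : ℝ) 1) :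
    ∃ C : ℝ, 0 < C ∧
      ∀ (h : ℝ → EuclideanSpace ℝ (Fin N)) (K : ℝ),
        ContDiff ℝ 1 h →
        Function.Periodic h (2 * Real.pi) →
        (∀ x y : ℝ, ‖deriv h x - deriv h y‖ ≤ K * |x - y| ^ κ₁) →
        ∀ x : ℝ, ∀ α ∈ Ioo (-Real.pi) Real.pi, α ≠ 0 →
          ‖deriv h (x - α) -
              ((1 / 2) * (Real.cos (α / 2) / Real.sin (α / 2))) • (h x - h (x - α))‖ ≤
            C * |α| ^ κ₁ * K :=
  periodic_difference_quotient_deviation_bound_general N κ₁ hκ₁
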